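/- For q not a root of unity and r ∈ ℂ, the q-analog (1−z)_{q^2}^r := (q^{-r+1}z; q^2)_∞ / (q^{r+1}z; q^2)_∞ satisfies (1−z)_{q^2}^r = exp(−∑_{n=1}^∞ ([rn]/(n[n])) z^n) as formal power series in z, where [x] = (q^x − q^{-x})/(q − q^{-1}) and (b;q)_∞ = ∏_{n=0}^∞ (1 − q^n b). -/

import Mathlib

open Complex

/-- The q-integer `[x] = (q^x - q^{-x})/(q - q^{-1})` for complex `x`,
using the principal branch `q^x = exp(x log q)`. -/
noncomputable def qint (q x : ℂ) : ℂ := (q ^ x - q ^ (-x)) / (q - q⁻¹)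

lemma summable_u (q w : ℂ) (hq1 : ‖q‖ < 1) (hw : ‖w‖ ≤ 1/2) :
    Summable (fun m : ℕ => w ^ (m + 1) / (((m : ℂ) + 1) * (1 - (q ^ 2) ^ (m + 1)))) := by
  have hk2 : ‖q‖ ^ 2 < 1 := pow_lt_one₀ (norm_nonneg q) hq1 two_ne_zero
  have hpos : (0:ℝ) < 1 - ‖q‖ ^ 2 := by linarith
  apply Summable.of_norm_bounded (g := fun m : ℕ => (1/2 : ℝ) ^ m / (1 - ‖q‖ ^ 2))
    ((summable_geometric_of_lt_one (by norm_num) (by norm_num)).div_const _)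
  intro m
  have hnum : ‖w ^ (m + 1)‖ ≤ (1/2 : ℝ) ^ m := by
    rw [norm_pow]
    calc ‖w‖ ^ (m + 1) ≤ (1/2 : ℝ) ^ (m + 1) :=
          pow_le_pow_left₀ (norm_nonneg w) hw (m + 1)
      _ ≤ (1/2 : ℝ) ^ m := by
          rw [pow_succ]
          nlinarith [pow_nonneg (by norm_num : (0:ℝ) ≤ 1/2) m]
  have hA : 1 - ‖q‖ ^ 2 ≤ ‖1 - (q ^ 2) ^ (m + 1)‖ := by
    have h1 : ‖((q ^ 2) ^ (m+1) : ℂ)‖ ≤ ‖q‖ ^ 2 := by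
      rw [norm_pow, norm_pow]
      exact pow_le_of_le_one (by positivity) (by nlinarith [norm_nonneg q]) (Nat.succ_ne_zero m)
    have h2 := norm_sub_norm_le (1 : ℂ) ((q ^ 2) ^ (m + 1))
    simp only [norm_one] at h2
    linarith
  have hB : (1:ℝ) ≤ ‖((m : ℂ) + 1)‖ := by
    have h : ((m : ℂ) + 1) = ((m + 1 : ℕ) : ℂ) := by push_cast; ring
    rw [h, Complex.norm_natCast]
    exact_mod_cast Nat.succ_le_succ (Nat.zero_le m)
  have hden : 1 - ‖q‖ ^ 2 ≤ ‖((m : ℂ) + 1) * (1 - (q ^ 2) ^ (m + 1))‖ := by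
    rw [norm_mul]
    calc 1 - ‖q‖ ^ 2 = 1 * (1 - ‖q‖ ^ 2) := (one_mul _).symm
      _ ≤ ‖((m : ℂ) + 1)‖ * ‖1 - (q ^ 2) ^ (m + 1)‖ :=
          mul_le_mul hB hA hpos.le (le_trans zero_le_one hB)
  rw [norm_div]
  exact div_le_div₀ (by positivity) hnum hpos hden

set_option maxHeartbeats 1000000 in
/-- Key product-to-exponential lemma. -/
lemma tprod_one_sub_eq_exp (q w : ℂ) (hq1 : ‖q‖ < 1) (hw : ‖w‖ ≤ 1/2) :
    ∏' n : ℕ, (1 - (q ^ 2) ^ n * w) =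
      Complex.exp (-∑' m : ℕ, w ^ (m + 1) / (((m : ℂ) + 1) * (1 - (q ^ 2) ^ (m + 1)))) := by
  have hq2 : ‖(q ^ 2 : ℂ)‖ < 1 := by
    rw [norm_pow]; exact pow_lt_one₀ (norm_nonneg q) hq1 two_ne_zero
  have hq2n : ∀ n : ℕ, ‖((q ^ 2) ^ n : ℂ)‖ ≤ 1 := by
    intro n; rw [norm_pow]; exact pow_le_one₀ (norm_nonneg _) hq2.le
  have hnorm : ∀ n : ℕ, ‖(q ^ 2) ^ n * w‖ ≤ 1/2 := by
    intro n
    rw [norm_mul]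
    calc ‖((q ^ 2) ^ n : ℂ)‖ * ‖w‖ ≤ 1 * (1/2) :=
          mul_le_mul (hq2n n) hw (norm_nonneg w) zero_le_one
      _ = 1/2 := one_mul _
  have hnorm' : ∀ n : ℕ, ‖(q ^ 2) ^ n * w‖ < 1 := fun n => (hnorm n).trans_lt (by norm_num)
  have hne : ∀ n : ℕ, 1 - (q ^ 2) ^ n * w ≠ 0 := by
    intro n h
    have h2 : (1:ℂ) = (q ^ 2) ^ n * w := by linear_combination h
    have := hnorm' n
    rw [← h2, norm_one] at this
    exact absurd this (lt_irrefl 1)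
  -- the double-indexed family
  set F : ℕ × ℕ → ℂ := fun p => -(((q ^ 2) ^ p.1 * w) ^ (p.2 + 1) / ((p.2 : ℂ) + 1)) with hF
  have hFsum : Summable F := by
    apply Summable.of_norm_bounded (g := fun p : ℕ × ℕ => (‖q‖ ^ 2) ^ p.1 * (1/2 : ℝ) ^ (p.2 + 1))
    · exact Summable.mul_of_nonneg
        (summable_geometric_of_lt_one (by positivity) (by rw [norm_pow] at hq2; exact hq2))
        ((summable_geometric_of_lt_one (by norm_num) (by norm_num)).mul_right (1/2)
          |>.congr (fun m => (pow_succ (1/2 : ℝ) m).symm))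
        (fun n => by positivity) (fun m => by positivity)
    · rintro ⟨n, m⟩
      have h1 : ‖F (n, m)‖ ≤ ‖(q ^ 2) ^ n * w‖ ^ (m + 1) := by
        rw [hF]
        simp only [norm_neg, norm_div, norm_pow]
        have hd : (1:ℝ) ≤ ‖((m : ℂ) + 1)‖ := by
          have h : ((m : ℂ) + 1) = ((m + 1 : ℕ) : ℂ) := by push_cast; ring
          rw [h, Complex.norm_natCast]; exact_mod_cast Nat.succ_le_succ (Nat.zero_le m)
        calc ‖(q ^ 2) ^ n * w‖ ^ (m + 1) / ‖((m : ℂ) + 1)‖ ≤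
              ‖(q ^ 2) ^ n * w‖ ^ (m + 1) / 1 :=
              div_le_div_of_nonneg_left (by positivity) one_pos hd
          _ = ‖(q ^ 2) ^ n * w‖ ^ (m + 1) := div_one _
      refine h1.trans ?_
      have e1 : ‖(q ^ 2) ^ n * w‖ ^ (m + 1) =
          ((‖q‖ ^ 2) ^ n) ^ (m + 1) * ‖w‖ ^ (m + 1) := by
        rw [norm_mul, mul_pow, norm_pow, norm_pow]
      rw [e1]
      have hqn1 : (‖q‖ ^ 2) ^ n ≤ 1 := pow_le_one₀ (by positivity) (by nlinarith [norm_nonneg q])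
      exact mul_le_mul
        (pow_le_of_le_one (by positivity) hqn1 (Nat.succ_ne_zero m))
        (pow_le_pow_left₀ (norm_nonneg w) hw (m + 1))
        (by positivity) (by positivity)
  -- each fiber sums to the log of a factor
  have hfib : ∀ n : ℕ, HasSum (fun m => F (n, m)) (Complex.log (1 - (q ^ 2) ^ n * w)) := by
    intro n
    have h := Complex.hasSum_taylorSeries_neg_log (z := (q ^ 2) ^ n * w) (hnorm' n)
    have h0 : (fun m : ℕ => ((q ^ 2) ^ n * w) ^ m / (m : ℂ)) 0 = 0 := by simp
    have h1 : HasSum (fun m : ℕ => ((q ^ 2) ^ n * w) ^ (m + 1) / ((m + 1 : ℕ) : ℂ))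
        (-Complex.log (1 - (q ^ 2) ^ n * w) -
          ∑ i ∈ Finset.range 1, ((q ^ 2) ^ n * w) ^ i / (i : ℂ)) :=
      (hasSum_nat_add_iff' 1).mpr h
    simp only [Finset.range_one, Finset.sum_singleton, h0, sub_zero] at h1
    have h2 : HasSum (fun m : ℕ => ((q ^ 2) ^ n * w) ^ (m + 1) / ((m : ℂ) + 1))
        (-Complex.log (1 - (q ^ 2) ^ n * w)) := by
      refine h1.congr_fun fun m => by push_cast; ring_nf
    simpa only [hF, neg_neg] using h2.neg
  have hlog : HasSum (fun n => Complex.log (1 - (q ^ 2) ^ n * w)) (∑' p : ℕ × ℕ, F p) :=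
    HasSum.prod_fiberwise hFsum.hasSum hfib
  -- the product equals exp of the sum of logs
  have hprod : HasProd (fun n => 1 - (q ^ 2) ^ n * w) (Complex.exp (∑' p : ℕ × ℕ, F p)) := by
    have := hlog.cexp
    refine this.congr_fun fun n => ?_
    simp only [Function.comp]
    exact (Complex.exp_log (hne n)).symm
  rw [hprod.tprod_eq]
  congr 1
  -- evaluate the double sum by swapping the order of summation
  have hswap : ∑' p : ℕ × ℕ, F p = ∑' (m : ℕ) (n : ℕ), F (n, m) := by
    rw [Summable.tsum_prod hFsum]
    exact (Summable.tsum_comm (f := fun n m => F (n, m)) hFsum).symm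
  rw [hswap]
  have hinner : ∀ m : ℕ, ∑' n : ℕ, F (n, m) =
      -(w ^ (m + 1) / (((m : ℂ) + 1) * (1 - (q ^ 2) ^ (m + 1)))) := by
    intro m
    have hgeo : ‖((q ^ 2) ^ (m + 1) : ℂ)‖ < 1 := by
      rw [norm_pow]
      exact pow_lt_one₀ (norm_nonneg _) hq2 (Nat.succ_ne_zero m)
    have hrw : ∀ n : ℕ, F (n, m) =
        (-(w ^ (m + 1) / ((m : ℂ) + 1))) * ((q ^ 2) ^ (m + 1)) ^ n := by
      intro n
      rw [hF]
      simp only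
      rw [mul_pow, ← pow_mul, ← pow_mul, mul_comm n (m+1)]
      ring
    rw [tsum_congr hrw, tsum_mul_left, tsum_geometric_of_norm_lt_one hgeo]
    have hX : (1 : ℂ) - (q ^ 2) ^ (m + 1) ≠ 0 := by
      intro h
      have h2 : (1:ℂ) = (q ^ 2) ^ (m + 1) := by linear_combination h
      rw [← h2, norm_one] at hgeo
      exact absurd hgeo (lt_irrefl 1)
    field_simp
  rw [tsum_congr hinner, tsum_neg]

lemma alg_lemma (A B N c : ℂ) (hA : A ≠ 0) (hB : B ≠ 0) (hN : N ≠ 0)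
    (h1B : 1 - B ^ 2 ≠ 0) (hBB : B - B⁻¹ ≠ 0) (hc : c ≠ 0) :
    (A - A⁻¹) / c / (N * ((B - B⁻¹) / c)) = (A⁻¹ * B - A * B) / (N * (1 - B ^ 2)) := by
  have hBB2 : B * B - 1 ≠ 0 := by
    intro h
    apply h1B
    have hB2 : B ^ 2 = 1 := by linear_combination h
    rw [hB2]; ring
  have hBB3 : B ^ 2 - 1 ≠ 0 := by rw [sq]; exact hBB2
  field_simp
  ring

lemma cpow_mul_natp (q x : ℂ) (m : ℕ) : q ^ (x * ((m : ℂ) + 1)) = (q ^ x) ^ (m + 1) := by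
  have h : ((m : ℂ) + 1) = ((m + 1 : ℕ) : ℂ) := by push_cast; ring
  rw [h, Complex.cpow_mul_nat]

/-- For `0 < |q| < 1` and `r ∈ ℂ`, the q-analog
`(1−z)_{q²}^r := (q^{-r+1}z; q²)_∞ / (q^{r+1}z; q²)_∞` satisfies
`(1−z)_{q²}^r = exp(−∑_{n≥1} ([rn]/(n[n])) zⁿ)` for `z` near `0`,
where `(b;q)_∞ = ∏_{n≥0}(1 − qⁿ b)`. -/
theorem q_analog_exp_formula (q r : ℂ) (h0 : 0 < ‖q‖) (h1 : ‖q‖ < 1) :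
    ∃ ε > (0 : ℝ), ∀ z : ℂ, ‖z‖ < ε →
      (∏' n : ℕ, (1 - (q ^ 2) ^ n * (q ^ (-r + 1) * z))) /
          (∏' n : ℕ, (1 - (q ^ 2) ^ n * (q ^ (r + 1) * z))) =
        Complex.exp
          (-∑' n : ℕ,
            (qint q (r * ((n : ℂ) + 1)) / (((n : ℂ) + 1) * qint q ((n : ℂ) + 1))) *
              z ^ (n + 1)) := by
  have hq0 : q ≠ 0 := by
    intro h; rw [h] at h0; simp at h0
  have hq1 : ‖q‖ < 1 := h1
  set a : ℂ := q ^ (-r + 1) with ha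
  set b : ℂ := q ^ (r + 1) with hb
  refine ⟨(1/2) / (max ‖a‖ ‖b‖ + 1), by positivity, fun z hz => ?_⟩
  have hM : (0:ℝ) < max ‖a‖ ‖b‖ + 1 := by positivity
  have hkey : ∀ c : ℂ, ‖c‖ ≤ max ‖a‖ ‖b‖ → ‖c * z‖ ≤ 1/2 := by
    intro c hc
    rw [norm_mul]
    have hz' : ‖z‖ < (1/2) / (max ‖a‖ ‖b‖ + 1) := hz
    calc ‖c‖ * ‖z‖ ≤ (max ‖a‖ ‖b‖ + 1) * ‖z‖ := by
          apply mul_le_mul_of_nonneg_right _ (norm_nonneg z); linarith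
      _ ≤ (max ‖a‖ ‖b‖ + 1) * ((1/2) / (max ‖a‖ ‖b‖ + 1)) := by
          apply mul_le_mul_of_nonneg_left hz'.le hM.le
      _ = 1/2 := by rw [mul_div_cancel₀]; exact ne_of_gt hM
  have hwa : ‖a * z‖ ≤ 1/2 := hkey a (le_max_left _ _)
  have hwb : ‖b * z‖ ≤ 1/2 := hkey b (le_max_right _ _)
  rw [tprod_one_sub_eq_exp q (a * z) hq1 hwa, tprod_one_sub_eq_exp q (b * z) hq1 hwb,
    ← Complex.exp_sub]
  congr 1
  have hsa := summable_u q (a * z) hq1 hwa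
  have hsb := summable_u q (b * z) hq1 hwb
  have hterm : ∀ m : ℕ,
      (qint q (r * ((m : ℂ) + 1)) / (((m : ℂ) + 1) * qint q ((m : ℂ) + 1))) * z ^ (m + 1) =
      (a * z) ^ (m + 1) / (((m : ℂ) + 1) * (1 - (q ^ 2) ^ (m + 1))) -
        (b * z) ^ (m + 1) / (((m : ℂ) + 1) * (1 - (q ^ 2) ^ (m + 1))) := by
    intro m
    set N : ℂ := (m : ℂ) + 1 with hN
    have hNne : N ≠ 0 := by
      rw [hN]
      intro h
      have : ((m + 1 : ℕ) : ℂ) = 0 := by push_cast; linear_combination h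
      exact Nat.cast_ne_zero.mpr (Nat.succ_ne_zero m) this
    set B : ℂ := q ^ (m + 1) with hB2
    have hBne : B ≠ 0 := pow_ne_zero _ hq0
    have hB2lt : ‖(B ^ 2 : ℂ)‖ < 1 := by
      rw [hB2, norm_pow, norm_pow]
      exact pow_lt_one₀ (by positivity) (pow_lt_one₀ (norm_nonneg q) hq1 (Nat.succ_ne_zero m))
        two_ne_zero
    have h1B : (1:ℂ) - B ^ 2 ≠ 0 := by
      intro h
      have h2 : (1:ℂ) = B ^ 2 := by linear_combination h
      rw [← h2, norm_one] at hB2lt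
      exact absurd hB2lt (lt_irrefl 1)
    have hq2B : ((q ^ 2) ^ (m + 1) : ℂ) = B ^ 2 := by
      rw [hB2, ← pow_mul, ← pow_mul, mul_comm]
    -- cpow computations
    set A : ℂ := q ^ (r * N) with hA2
    have hAne : A ≠ 0 := by
      rw [hA2, Complex.cpow_def_of_ne_zero hq0]; exact Complex.exp_ne_zero _
    have hqN : q ^ (N : ℂ) = B := by
      rw [hN, hB2]
      have h : ((m : ℂ) + 1) = ((m + 1 : ℕ) : ℂ) := by push_cast; ring
      rw [h, Complex.cpow_natCast]
    have hnegN : q ^ (-N : ℂ) = B⁻¹ := by rw [Complex.cpow_neg, hqN]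
    have hnegrN : q ^ (-(r * N) : ℂ) = A⁻¹ := by rw [Complex.cpow_neg, hA2]
    have haN : a ^ (m + 1) = A⁻¹ * B := by
      rw [ha, ← cpow_mul_natp, ← hN, show (-r + 1) * N = -(r * N) + N by ring,
        Complex.cpow_add _ _ hq0, hnegrN, hqN]
    have hbN : b ^ (m + 1) = A * B := by
      rw [hb, ← cpow_mul_natp, ← hN, show (r + 1) * N = r * N + N by ring,
        Complex.cpow_add _ _ hq0, hA2, hqN]
    have hqq : q - q⁻¹ ≠ 0 := by
      intro h
      have h2 : q * q - 1 = 0 := by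
        have := mul_eq_zero_of_left h q
        field_simp at this
        linear_combination this
      have h3 : ‖q * q‖ = 1 := by
        have : q * q = 1 := by linear_combination h2
        rw [this, norm_one]
      rw [norm_mul] at h3
      nlinarith [norm_nonneg q]
    have hqintN : qint q N = (B - B⁻¹) / (q - q⁻¹) := by
      rw [qint, hqN, hnegN]
    have hqintrN : qint q (r * N) = (A - A⁻¹) / (q - q⁻¹) := by
      rw [qint, hA2, hnegrN]
    have hBB : B - B⁻¹ ≠ 0 := by
      intro h
      have h2 : B ^ 2 - 1 = 0 := by
        have := mul_eq_zero_of_left h B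
        field_simp at this
        linear_combination this
      exact h1B (by linear_combination -h2)
    rw [hqintN, hqintrN, hq2B, mul_pow, mul_pow, haN, hbN,
      alg_lemma A B N (q - q⁻¹) hAne hBne hNne h1B hBB hqq]
    ring
  rw [tsum_congr hterm, Summable.tsum_sub hsa hsb]
  ring
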